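/- arXiv:2209.08689 — 6 statements merged into one kernel-verified Lean document; each statement's English description precedes it below -/
import Mathlib

section
/- Assume w_I > 0, Γ_l < 0 with Γ_l ≤ Γ_j and Γ_l ≤ Γ̃_j for all j, Ω̃ ≥ ω̃_j for all j with Ω̃ > 0, and let T satisfy 0 ≤ T ≤ π/(2Ω̃). Set C_II = ∑_{j=1}^K r_j and C_III(T) = 2∑_{j=1}^L r̃_j cos(ω̃_j T), and assume C_II + C_III(T) > 0. If t_CB satisfies 0 ≤ t_CB ≤ T and w(t_CB) ≥ 0, then t_CB ≥ (1/|Γ_l|) · ln((C_II + C_III(T)) / w_I). -/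
open scoped BigOperators

/-- **General bound for good configurations.**
For the good-configuration witness function
`w(t) = w_I − ∑_j r_j e^{Γ_j t} − 2∑_j r̃_j e^{Γ̃_j t} cos(ω̃_j t)` with
`w_I > 0`, `Γ_l < 0` a common lower bound of all decay rates, `Ω̃` an upper
bound of the frequencies with `Ω̃ > 0`, and `0 ≤ T ≤ π/(2Ω̃)`: if
`C_II + C_III(T) > 0` and `0 ≤ t_CB ≤ T` with `w(t_CB) ≥ 0`, then
`t_CB ≥ (1/|Γ_l|)·ln((C_II + C_III(T))/w_I)`. -/
theorem good_configuration_bound (K L : ℕ)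
    (wI : ℝ) (r Γ : Fin K → ℝ) (rt Γt ωt : Fin L → ℝ)
    (hr : ∀ j, 0 ≤ r j) (hrt : ∀ j, 0 ≤ rt j)
    (hΓ : ∀ j, Γ j ≤ 0) (hΓt : ∀ j, Γt j ≤ 0) (hωt : ∀ j, 0 ≤ ωt j)
    (w : ℝ → ℝ)
    (hw : ∀ t, w t = wI - (∑ j, r j * Real.exp (Γ j * t))
        - 2 * ∑ j, rt j * Real.exp (Γt j * t) * Real.cos (ωt j * t))
    (hwI : 0 < wI)
    (Γl : ℝ) (hΓlneg : Γl < 0) (hΓl : ∀ j, Γl ≤ Γ j) (hΓlt : ∀ j, Γl ≤ Γt j)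
    (Ω : ℝ) (hΩ : ∀ j, ωt j ≤ Ω) (hΩpos : 0 < Ω)
    (T : ℝ) (hT0 : 0 ≤ T) (hT : T ≤ Real.pi / (2 * Ω))
    (hC : 0 < (∑ j, r j) + 2 * ∑ j, rt j * Real.cos (ωt j * T))
    (tCB : ℝ) (htCB0 : 0 ≤ tCB) (htCBT : tCB ≤ T) (hwtCB : 0 ≤ w tCB) :
    (1 / |Γl|) * Real.log (((∑ j, r j) + 2 * ∑ j, rt j * Real.cos (ωt j * T)) / wI)
      ≤ tCB := by
  set C : ℝ := (∑ j, r j) + 2 * ∑ j, rt j * Real.cos (ωt j * T) with hCdef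
  -- key: exp(Γl * tCB) * C ≤ wI
  have hwt := hw tCB
  have h1 : ∀ j : Fin K, r j * Real.exp (Γl * tCB) ≤ r j * Real.exp (Γ j * tCB) := fun j =>
    mul_le_mul_of_nonneg_left
      (Real.exp_le_exp.2 (mul_le_mul_of_nonneg_right (hΓl j) htCB0)) (hr j)
  have h2 : ∀ j : Fin L, rt j * Real.cos (ωt j * T) * Real.exp (Γl * tCB)
      ≤ rt j * Real.exp (Γt j * tCB) * Real.cos (ωt j * tCB) := by
    intro j
    have hωT2 : ωt j * T ≤ Real.pi / 2 := by
      have h1 : ωt j * T ≤ Ω * T := mul_le_mul_of_nonneg_right (hΩ j) hT0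
      have h2 : Ω * T ≤ Ω * (Real.pi / (2 * Ω)) := mul_le_mul_of_nonneg_left hT hΩpos.le
      have h3 : Ω * (Real.pi / (2 * Ω)) = Real.pi / 2 := by
        field_simp
      linarith
    have hωt0 : 0 ≤ ωt j * tCB := mul_nonneg (hωt j) htCB0
    have hle : ωt j * tCB ≤ ωt j * T := mul_le_mul_of_nonneg_left htCBT (hωt j)
    have hcosT0 : 0 ≤ Real.cos (ωt j * T) :=
      Real.cos_nonneg_of_mem_Icc ⟨by linarith [Real.pi_pos, mul_nonneg (hωt j) hT0], hωT2⟩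
    have hcos : Real.cos (ωt j * T) ≤ Real.cos (ωt j * tCB) :=
      Real.cos_le_cos_of_nonneg_of_le_pi hωt0 (by linarith [Real.pi_pos]) hle
    calc rt j * Real.cos (ωt j * T) * Real.exp (Γl * tCB)
        ≤ rt j * Real.cos (ωt j * T) * Real.exp (Γt j * tCB) :=
          mul_le_mul_of_nonneg_left
            (Real.exp_le_exp.2 (mul_le_mul_of_nonneg_right (hΓlt j) htCB0))
            (mul_nonneg (hrt j) hcosT0)
      _ ≤ rt j * Real.exp (Γt j * tCB) * Real.cos (ωt j * tCB) := by
          rw [mul_right_comm]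
          exact mul_le_mul_of_nonneg_left hcos (mul_nonneg (hrt j) (Real.exp_pos _).le)
  have hsum1 : (∑ j, r j) * Real.exp (Γl * tCB) ≤ ∑ j, r j * Real.exp (Γ j * tCB) := by
    rw [Finset.sum_mul]
    exact Finset.sum_le_sum fun j _ => h1 j
  have hsum2 : (∑ j, rt j * Real.cos (ωt j * T)) * Real.exp (Γl * tCB)
      ≤ ∑ j, rt j * Real.exp (Γt j * tCB) * Real.cos (ωt j * tCB) := by
    rw [Finset.sum_mul]
    exact Finset.sum_le_sum fun j _ => h2 j
  have hE : Real.exp (Γl * tCB) * C ≤ wI := by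
    have : C * Real.exp (Γl * tCB)
        ≤ (∑ j, r j * Real.exp (Γ j * tCB))
          + 2 * ∑ j, rt j * Real.exp (Γt j * tCB) * Real.cos (ωt j * tCB) := by
      rw [hCdef, add_mul]
      nlinarith [hsum1, hsum2]
    nlinarith [this]
  -- conclude
  have hCwI : 0 < C / wI := div_pos hC hwI
  have hdiv : C / wI ≤ Real.exp (-(Γl * tCB)) := by
    rw [div_le_iff₀ hwI, Real.exp_neg]
    rw [inv_mul_eq_div, le_div_iff₀ (Real.exp_pos _)] at *
    nlinarith [hE, Real.exp_pos (Γl * tCB)]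
  have hlog : Real.log (C / wI) ≤ -(Γl * tCB) := by
    calc Real.log (C / wI) ≤ Real.log (Real.exp (-(Γl * tCB))) :=
          Real.log_le_log hCwI hdiv
      _ = -(Γl * tCB) := Real.log_exp _
  rw [abs_of_neg hΓlneg]
  rw [one_div, inv_mul_le_iff₀ (by linarith : (0:ℝ) < -Γl)]
  nlinarith [hlog]
end

section
/- Assume w_I > 0, Γ_l < 0 with Γ_l ≤ Γ_j and Γ_l ≤ Γ̃_j for all j, Ω̃ ≥ ω̃_j for all j with Ω̃ > 0, and let T satisfy 0 ≤ T ≤ π/(2Ω̃). Set C_II = ∑_{j=1}^K r_j, C_III(T) = 2∑_{j=1}^L r̃_j cos(ω̃_j T), assume C_II + C_III(T) > 0, and define τ_CB(T) = (1/|Γ_l|) · ln((C_II + C_III(T)) / w_I). If t_CB ≥ 0 and w(t_CB) ≥ 0, then t_CB ≥ min{T, τ_CB(T)}. -/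
/-!
On `[0, T]` every exponential is at least `exp (Γl t)` and every cosine `cos (ωt j t)` is at
least `cos (ωt j T) ≥ 0`, since `ωt j T ≤ π/2`. Hence `w t ≤ wI - exp (Γl t) (C_II + C_III(T))`,
which is negative as long as `t < τ_CB(T)`, the time at which `exp (Γl t) (C_II + C_III(T))`
decays to `wI`.
-/

open Finset Real

section DampedSums

variable {ι : Type*} (s : Finset ι) {r Γ : ι → ℝ} {γ t : ℝ}

lemma exp_mul_sum_le_sum_mul_exp (hr : ∀ j ∈ s, 0 ≤ r j) (hγ : ∀ j ∈ s, γ ≤ Γ j)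
    (ht : 0 ≤ t) :
    exp (γ * t) * ∑ j ∈ s, r j ≤ ∑ j ∈ s, r j * exp (Γ j * t) := by
  rw [mul_sum]
  refine sum_le_sum fun j hj => ?_
  rw [mul_comm]
  exact mul_le_mul_of_nonneg_left
    (exp_le_exp.mpr (mul_le_mul_of_nonneg_right (hγ j hj) ht)) (hr j hj)

lemma exp_mul_sum_mul_cos_le_sum_mul_exp_mul_cos {ω : ι → ℝ} {T : ℝ}
    (hr : ∀ j ∈ s, 0 ≤ r j) (hγ : ∀ j ∈ s, γ ≤ Γ j) (hω : ∀ j ∈ s, 0 ≤ ω j)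
    (hωT : ∀ j ∈ s, ω j * T ≤ π / 2) (ht : 0 ≤ t) (htT : t ≤ T) :
    exp (γ * t) * ∑ j ∈ s, r j * cos (ω j * T) ≤
      ∑ j ∈ s, r j * exp (Γ j * t) * cos (ω j * t) := by
  rw [mul_sum]
  refine sum_le_sum fun j hj => ?_
  have hωtT : ω j * t ≤ ω j * T := mul_le_mul_of_nonneg_left htT (hω j hj)
  have hcosT : 0 ≤ cos (ω j * T) :=
    cos_nonneg_of_mem_Icc ⟨by linarith [mul_nonneg (hω j hj) ht, pi_pos], hωT j hj⟩
  have hcos : cos (ω j * T) ≤ cos (ω j * t) :=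
    cos_le_cos_of_nonneg_of_le_pi (mul_nonneg (hω j hj) ht)
      (by linarith [hωT j hj, pi_pos]) hωtT
  have hexp : exp (γ * t) ≤ exp (Γ j * t) :=
    exp_le_exp.mpr (mul_le_mul_of_nonneg_right (hγ j hj) ht)
  calc exp (γ * t) * (r j * cos (ω j * T))
      = r j * exp (γ * t) * cos (ω j * T) := by ring
    _ ≤ r j * exp (Γ j * t) * cos (ω j * t) :=
      mul_le_mul (mul_le_mul_of_nonneg_left hexp (hr j hj)) hcos hcosT
        (mul_nonneg (hr j hj) (exp_pos _).le)

end DampedSums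

lemma lt_exp_mul_mul_of_lt_log_div {γ C a t : ℝ} (hγ : γ < 0) (hC : 0 < C) (ha : 0 < a)
    (ht : t < 1 / |γ| * log (C / a)) :
    a < exp (γ * t) * C := by
  rw [abs_of_neg hγ, one_div, inv_mul_eq_div, lt_div_iff₀ (neg_pos.mpr hγ)] at ht
  have hlog : log (a / C) < γ * t := by
    rw [← inv_div, log_inv]
    linarith [show t * -γ = -(γ * t) by ring]
  calc a = a / C * C := (div_mul_cancel₀ a hC.ne').symm
    _ < exp (γ * t) * C := by
      gcongr
      exact (log_lt_iff_lt_exp (div_pos ha hC)).mp hlog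

theorem good_configuration_min_bound_general (K L : ℕ)
    (wI : ℝ) (r Γ : Fin K → ℝ) (rt Γt ωt : Fin L → ℝ)
    (hr : ∀ j, 0 ≤ r j) (hrt : ∀ j, 0 ≤ rt j)
    (hωt : ∀ j, 0 ≤ ωt j)
    (w : ℝ → ℝ)
    (hw : ∀ t, w t = wI - (∑ j, r j * Real.exp (Γ j * t))
        - 2 * ∑ j, rt j * Real.exp (Γt j * t) * Real.cos (ωt j * t))
    (hwI : 0 < wI)
    (Γl : ℝ) (hΓlneg : Γl < 0) (hΓl : ∀ j, Γl ≤ Γ j) (hΓlt : ∀ j, Γl ≤ Γt j)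
    (Ω : ℝ) (hΩ : ∀ j, ωt j ≤ Ω) (hΩpos : 0 < Ω)
    (T : ℝ) (hT0 : 0 ≤ T) (hT : T ≤ Real.pi / (2 * Ω))
    (hC : 0 < (∑ j, r j) + 2 * ∑ j, rt j * Real.cos (ωt j * T))
    (τCB : ℝ)
    (hτ : τCB = (1 / |Γl|) *
        Real.log (((∑ j, r j) + 2 * ∑ j, rt j * Real.cos (ωt j * T)) / wI))
    (tCB : ℝ) (htCB0 : 0 ≤ tCB) (hwtCB : 0 ≤ w tCB) :
    min T τCB ≤ tCB := by
  by_contra! h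
  have htT : tCB < T := h.trans_le (min_le_left _ _)
  have htτ : tCB < τCB := h.trans_le (min_le_right _ _)
  have hωT : ∀ j ∈ univ, ωt j * T ≤ π / 2 := fun j _ => calc
    ωt j * T ≤ Ω * T := mul_le_mul_of_nonneg_right (hΩ j) hT0
    _ ≤ Ω * (π / (2 * Ω)) := mul_le_mul_of_nonneg_left hT hΩpos.le
    _ = π / 2 := by field_simp
  have hK := exp_mul_sum_le_sum_mul_exp univ (fun j _ => hr j) (fun j _ => hΓl j) htCB0
  have hL := exp_mul_sum_mul_cos_le_sum_mul_exp_mul_cos univ (fun j _ => hrt j)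
    (fun j _ => hΓlt j) (fun j _ => hωt j) hωT htCB0 htT.le
  have hwI_lt := lt_exp_mul_mul_of_lt_log_div hΓlneg hC hwI (hτ ▸ htτ)
  rw [mul_add, mul_left_comm] at hwI_lt
  rw [hw] at hwtCB
  linarith

/-- **General bound for good configurations, min form.**
With `τ_CB(T) = (1/|Γ_l|)·ln((C_II + C_III(T))/w_I)`: if `t_CB ≥ 0` and
`w(t_CB) ≥ 0`, then `t_CB ≥ min{T, τ_CB(T)}`. -/
theorem good_configuration_min_bound (K L : ℕ)
    (wI : ℝ) (r Γ : Fin K → ℝ) (rt Γt ωt : Fin L → ℝ)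
    (hr : ∀ j, 0 ≤ r j) (hrt : ∀ j, 0 ≤ rt j)
    (hΓ : ∀ j, Γ j ≤ 0) (hΓt : ∀ j, Γt j ≤ 0) (hωt : ∀ j, 0 ≤ ωt j)
    (w : ℝ → ℝ)
    (hw : ∀ t, w t = wI - (∑ j, r j * Real.exp (Γ j * t))
        - 2 * ∑ j, rt j * Real.exp (Γt j * t) * Real.cos (ωt j * t))
    (hwI : 0 < wI)
    (Γl : ℝ) (hΓlneg : Γl < 0) (hΓl : ∀ j, Γl ≤ Γ j) (hΓlt : ∀ j, Γl ≤ Γt j)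
    (Ω : ℝ) (hΩ : ∀ j, ωt j ≤ Ω) (hΩpos : 0 < Ω)
    (T : ℝ) (hT0 : 0 ≤ T) (hT : T ≤ Real.pi / (2 * Ω))
    (hC : 0 < (∑ j, r j) + 2 * ∑ j, rt j * Real.cos (ωt j * T))
    (τCB : ℝ)
    (hτ : τCB = (1 / |Γl|) *
        Real.log (((∑ j, r j) + 2 * ∑ j, rt j * Real.cos (ωt j * T)) / wI))
    (tCB : ℝ) (htCB0 : 0 ≤ tCB) (hwtCB : 0 ≤ w tCB) :
    min T τCB ≤ tCB :=
  good_configuration_min_bound_general K L wI r Γ rt Γt ωt hr hrt hωt w hw hwI Γl hΓlneg hΓl hΓlt Ω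
    hΩ hΩpos T hT0 hT hC τCB hτ tCB htCB0 hwtCB
end

section
/- Let r̃_1,…,r̃_L ≥ 0, Γ̃_1,…,Γ̃_L ≤ 0, and ω̃_1,…,ω̃_L ≥ 0 be real numbers. Then for every t ≥ 0, the oscillatory part of the witness function satisfies −2∑_{j=1}^L r̃_j e^{Γ̃_j t} cos(ω̃_j t) ≤ 2∑_{j=1}^L r̃_j · [ (2/π)·ω̃_j·t + ((π−2)/π)·(|Γ̃_j|·t − 1) ]. -/
open scoped BigOperators

/-- Key pointwise bound: `-cos x ≤ (2/π) x - (π-2)/π` for `x ≥ 0`. -/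
lemma neg_cos_le_ml (x : ℝ) (hx : 0 ≤ x) :
    -Real.cos x ≤ (2 / Real.pi) * x - (Real.pi - 2) / Real.pi := by
  have hpi : (0:ℝ) < Real.pi := Real.pi_pos
  have hpil : 3.141592 < Real.pi := Real.pi_gt_d6
  have hpiu : Real.pi < 3.141593 := Real.pi_lt_d6
  rw [show (2 / Real.pi) * x - (Real.pi - 2) / Real.pi
      = (2 * x - (Real.pi - 2)) / Real.pi from by ring, le_div_iff₀ hpi]
  rcases le_or_gt x (Real.pi / 2) with h1 | h1
  · -- use cos x ≥ 1 - x²/2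
    have hq : 1 - x ^ 2 / 2 ≤ Real.cos x := Real.one_sub_sq_div_two_le_cos
    nlinarith [mul_nonneg (mul_nonneg hpi.le hx) (sub_nonneg.2 h1), sq_nonneg x]
  rcases le_or_gt x Real.pi with h2 | h2
  · -- -cos x = sin (x - π/2) ≤ x - π/2
    have hs : Real.sin (x - Real.pi / 2) ≤ x - Real.pi / 2 :=
      Real.sin_le (by linarith)
    have hc : Real.sin (x - Real.pi / 2) = -Real.cos x := by
      rw [← Real.sin_pi_div_two_sub x, ← Real.sin_neg]; ring_nf
    rw [hc] at hs
    nlinarith [mul_nonneg (sub_nonneg.2 h2) (by linarith : (0:ℝ) ≤ Real.pi - 2)]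
  · -- x > π : -cos x ≤ 1 and RHS ≥ π
    have hc : -Real.cos x ≤ 1 := by
      have := Real.neg_one_le_cos x; linarith
    nlinarith

/-- Pointwise bound with damping: for `s, x ≥ 0`,
`-e^{-s} cos x ≤ (2/π) x + ((π-2)/π)(s - 1)`. -/
lemma neg_exp_cos_le (s x : ℝ) (hs : 0 ≤ s) (hx : 0 ≤ x) :
    -(Real.exp (-s) * Real.cos x) ≤
      (2 / Real.pi) * x + (Real.pi - 2) / Real.pi * (s - 1) := by
  have hpi : (0:ℝ) < Real.pi := Real.pi_pos
  have hpi2 : (2:ℝ) < Real.pi := by linarith [Real.pi_gt_d6]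
  have hratio : 0 ≤ (Real.pi - 2) / Real.pi := div_nonneg (by linarith) hpi.le
  have hratio1 : (Real.pi - 2) / Real.pi ≤ 1 := by
    rw [div_le_one hpi]; linarith
  have hexp1 : Real.exp (-s) ≤ 1 := Real.exp_le_one_iff.mpr (by linarith)
  have hexp0 : 0 < Real.exp (-s) := Real.exp_pos _
  have hml := neg_cos_le_ml x hx
  have hx2 : 0 ≤ (2 / Real.pi) * x := by positivity
  rcases le_or_gt (Real.cos x) 0 with hc | hc
  · -- -e^{-s} cos x ≤ -cos x
    have h1 : -(Real.exp (-s) * Real.cos x) ≤ -Real.cos x := by nlinarith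
    have h2 : 0 ≤ (Real.pi - 2) / Real.pi * s := mul_nonneg hratio hs
    nlinarith
  rcases le_or_gt 1 s with hs1 | hs1
  · -- LHS ≤ 0 ≤ RHS
    have h1 : -(Real.exp (-s) * Real.cos x) ≤ 0 := by nlinarith
    nlinarith [mul_nonneg hratio (by linarith : (0:ℝ) ≤ s - 1)]
  · -- s < 1, cos x > 0
    have hlb : 1 - s ≤ Real.exp (-s) := by
      have := Real.add_one_le_exp (-s); linarith
    have h1 : -(Real.exp (-s) * Real.cos x) ≤ -((1 - s) * Real.cos x) := by
      nlinarith
    rcases le_or_gt ((Real.pi - 2) / Real.pi) (Real.cos x) with hcc | hcc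
    · have h3 : -((1 - s) * Real.cos x) ≤ -((1 - s) * ((Real.pi - 2) / Real.pi)) := by
        nlinarith
      nlinarith
    · -- cos x < (π-2)/π : use ml bound plus s·cos x ≤ s·(π-2)/π
      have h3 : s * Real.cos x ≤ s * ((Real.pi - 2) / Real.pi) :=
        mul_le_mul_of_nonneg_left hcc.le hs
      nlinarith

/-- For amplitudes `r̃_j ≥ 0`, decay rates `Γ̃_j ≤ 0` and frequencies
`ω̃_j ≥ 0`, the oscillatory part of the witness function satisfies, for all
`t ≥ 0`,
`−2∑_j r̃_j e^{Γ̃_j t} cos(ω̃_j t) ≤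
  2∑_j r̃_j [(2/π)ω̃_j t + ((π−2)/π)(|Γ̃_j| t − 1)]`. -/
theorem oscillatory_part_margolus_levitin_bound (L : ℕ) (r Γ ω : Fin L → ℝ)
    (hr : ∀ j, 0 ≤ r j) (hΓ : ∀ j, Γ j ≤ 0) (hω : ∀ j, 0 ≤ ω j)
    (t : ℝ) (ht : 0 ≤ t) :
    -(2 * ∑ j, r j * Real.exp (Γ j * t) * Real.cos (ω j * t)) ≤
      2 * ∑ j, r j * ((2 / Real.pi) * ω j * t
        + ((Real.pi - 2) / Real.pi) * (|Γ j| * t - 1)) := by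
  have hterm : ∀ j : Fin L,
      -(r j * Real.exp (Γ j * t) * Real.cos (ω j * t)) ≤
        r j * ((2 / Real.pi) * ω j * t
          + ((Real.pi - 2) / Real.pi) * (|Γ j| * t - 1)) := by
    intro j
    have habs : |Γ j| = -Γ j := abs_of_nonpos (hΓ j)
    have hΓt : Γ j * t = -(|Γ j| * t) := by rw [habs]; ring
    have hsnn : 0 ≤ |Γ j| * t := mul_nonneg (abs_nonneg _) ht
    have hxnn : 0 ≤ ω j * t := mul_nonneg (hω j) ht
    have main := neg_exp_cos_le (|Γ j| * t) (ω j * t) hsnn hxnn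
    have h2 := mul_le_mul_of_nonneg_left main (hr j)
    calc -(r j * Real.exp (Γ j * t) * Real.cos (ω j * t))
        = r j * -(Real.exp (-(|Γ j| * t)) * Real.cos (ω j * t)) := by
          rw [hΓt]; ring
      _ ≤ r j * ((2 / Real.pi) * (ω j * t)
            + (Real.pi - 2) / Real.pi * (|Γ j| * t - 1)) := h2
      _ = r j * ((2 / Real.pi) * ω j * t
            + ((Real.pi - 2) / Real.pi) * (|Γ j| * t - 1)) := by ring
  have hsum := Finset.sum_le_sum (fun j (_ : j ∈ Finset.univ) => hterm j)
  rw [Finset.sum_neg_distrib] at hsum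
  linarith
end

section
/- Assume w_I = r_0 ≥ 0. If t_CB ≥ 0 satisfies w(t_CB) ≥ 0, then t_CB · [ ∑_{j=1}^K r_j |Γ_j| + 2∑_{j=1}^L r̃_j ( (2/π)·ω̃_j + ((π−2)/π)·|Γ̃_j| ) ] ≥ ∑_{j=1}^K r_j + 2·((π−2)/π)·∑_{j=1}^L r̃_j − r_0. In particular, when the bracketed quantity D is positive, t_CB ≥ ( ∑_{j=1}^K r_j + 2((π−2)/π)∑_{j=1}^L r̃_j − r_0 ) / D. (Margolus–Levitin-inspired bound for good configurations.) -/
open scoped BigOperators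

open Real in
/-- Key ML-type pointwise bound. -/
lemma ml_key_bound (θ s : ℝ) (hθ : 0 ≤ θ) (hs : 0 ≤ s) :
    (π - 2) / π - (2 / π) * θ - ((π - 2) / π) * s ≤ Real.exp (-s) * Real.cos θ := by
  have hπ1 : (3.14 : ℝ) < π := pi_gt_d2
  have hπ2 : π < 3.15 := pi_lt_d2
  have hπ0 : (0:ℝ) < π := by linarith
  obtain ⟨b, hb⟩ : ∃ b : ℝ, b = 2 / π := ⟨_, rfl⟩
  have hbπ : b * π = 2 := by rw [hb]; field_simp
  have hb1 : b ≤ 0.637 := by rw [hb, div_le_iff₀ hπ0]; nlinarith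
  have hb2 : 0.634 ≤ b := by rw [hb, le_div_iff₀ hπ0]; nlinarith
  have hc : (π - 2) / π = 1 - b := by
    rw [hb]; field_simp
  rw [hc, ← hb]
  have hexp1 : Real.exp (-s) ≤ 1 := Real.exp_le_one_iff.mpr (by linarith)
  have hexp0 : 0 < Real.exp (-s) := Real.exp_pos _
  have hexp2 : 1 - s ≤ Real.exp (-s) := by
    have := Real.add_one_le_exp (-s); linarith
  have hcos1 : Real.cos θ ≤ 1 := Real.cos_le_one θ
  have hcosm1 : -1 ≤ Real.cos θ := Real.neg_one_le_cos θ
  have hbs : 0 ≤ (1 - b) * s := mul_nonneg (by linarith) hs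
  have hbθ : 0 ≤ b * θ := mul_nonneg (by linarith) hθ
  rcases le_or_gt (1 - b - b * θ) (-1) with hL | hL
  · -- L ≤ -1
    have e1 : -Real.exp (-s) ≤ Real.exp (-s) * Real.cos θ := by
      nlinarith [mul_le_mul_of_nonneg_left hcosm1 hexp0.le]
    linarith
  · -- θ < π - 1
    rcases le_or_gt 0 (Real.cos θ) with hcos | hcos
    · have hec : 0 ≤ Real.exp (-s) * Real.cos θ := mul_nonneg hexp0.le hcos
      rcases le_or_gt (1 - b - b * θ) 0 with hL0 | hL0
      · linarith
      · -- L > 0, so θ small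
        have hθs : θ < 0.58 := by nlinarith
        have hθθ : θ * θ ≤ 0.58 * 0.58 :=
          mul_le_mul hθs.le hθs.le hθ (by norm_num)
        have hq : 1 - b - b * θ ≤ Real.cos θ := by
          have := Real.one_sub_sq_div_two_le_cos (x := θ)
          nlinarith
        rcases le_or_gt 1 s with hs1 | hs1
        · have : 1 - b ≤ (1 - b) * s := by nlinarith
          linarith
        · have h1 : (1 - s) * (1 - b - b * θ) ≤ (1 - s) * Real.cos θ :=
            mul_le_mul_of_nonneg_left hq (by linarith)
          have h2 : (1 - s) * Real.cos θ ≤ Real.exp (-s) * Real.cos θ :=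
            mul_le_mul_of_nonneg_right hexp2 hcos
          nlinarith [mul_nonneg hs hbθ]
    · -- cos θ < 0, so π/2 < θ < π - 1
      have hθhalf : π / 2 < θ := by
        by_contra h
        push_neg at h
        exact absurd (Real.cos_nonneg_of_neg_pi_div_two_le_of_le (by linarith) h)
          (by linarith)
      obtain ⟨u, hu⟩ : ∃ u : ℝ, u = π - θ := ⟨_, rfl⟩
      have hu1 : 1 < u := by rw [hu]; nlinarith
      have hu2 : u < π / 2 := by rw [hu]; linarith
      have hpu : π - u = θ := by rw [hu]; ring
      have hcosθ : Real.cos θ = -Real.cos u := by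
        rw [← hpu, Real.cos_pi_sub]
      have hcu : Real.cos u ≤ Real.cos 1 :=
        Real.cos_le_cos_of_nonneg_of_le_pi (by norm_num) (by linarith) hu1.le
      have hcos1b : Real.cos 1 ≤ 53 / 96 := by
        have := Real.cos_bound (x := (1:ℝ)) (by norm_num)
        rw [abs_le] at this
        norm_num at this
        linarith [this.2]
      have hcupos : 0 ≤ Real.cos u :=
        Real.cos_nonneg_of_neg_pi_div_two_le_of_le (by linarith) hu2.le
      have h1 : -Real.cos u ≤ Real.exp (-s) * Real.cos θ := by
        rw [hcosθ]
        have h2 : Real.exp (-s) * Real.cos u ≤ Real.cos u :=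
          mul_le_of_le_one_left hcupos hexp1
        linarith [h2]
      have hbθ2 : b * (π / 2) ≤ b * θ :=
        mul_le_mul_of_nonneg_left hθhalf.le (by linarith)
      linarith [h1, hbθ2, hcu, hcos1b, hbs]

/-- **Margolus–Levitin-inspired bound for good configurations.**
For the good-configuration witness function
`w(t) = r_0 − ∑_j r_j e^{Γ_j t} − 2∑_j r̃_j e^{Γ̃_j t} cos(ω̃_j t)` with
`w_I = r_0 ≥ 0`: if `t_CB ≥ 0` satisfies `w(t_CB) ≥ 0`, then
`t_CB · D ≥ ∑_j r_j + 2((π−2)/π)∑_j r̃_j − r_0` where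
`D = ∑_j r_j|Γ_j| + 2∑_j r̃_j((2/π)ω̃_j + ((π−2)/π)|Γ̃_j|)`; in particular
`t_CB ≥ N/D` when `D > 0`. -/
theorem margolus_levitin_good_configuration (K L : ℕ)
    (r0 : ℝ) (r Γ : Fin K → ℝ) (rt Γt ωt : Fin L → ℝ)
    (hr0 : 0 ≤ r0) (hr : ∀ j, 0 ≤ r j) (hrt : ∀ j, 0 ≤ rt j)
    (hΓ : ∀ j, Γ j ≤ 0) (hΓt : ∀ j, Γt j ≤ 0) (hωt : ∀ j, 0 ≤ ωt j)
    (w : ℝ → ℝ)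
    (hw : ∀ t, w t = r0 - (∑ j, r j * Real.exp (Γ j * t))
        - 2 * ∑ j, rt j * Real.exp (Γt j * t) * Real.cos (ωt j * t))
    (tCB : ℝ) (htCB0 : 0 ≤ tCB) (hwtCB : 0 ≤ w tCB) :
    ((∑ j, r j) + 2 * ((Real.pi - 2) / Real.pi) * (∑ j, rt j) - r0 ≤
      tCB * ((∑ j, r j * |Γ j|)
        + 2 * ∑ j, rt j * ((2 / Real.pi) * ωt j
            + ((Real.pi - 2) / Real.pi) * |Γt j|))) ∧
    (0 < (∑ j, r j * |Γ j|)
        + 2 * ∑ j, rt j * ((2 / Real.pi) * ωt j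
            + ((Real.pi - 2) / Real.pi) * |Γt j|) →
      ((∑ j, r j) + 2 * ((Real.pi - 2) / Real.pi) * (∑ j, rt j) - r0) /
        ((∑ j, r j * |Γ j|)
          + 2 * ∑ j, rt j * ((2 / Real.pi) * ωt j
              + ((Real.pi - 2) / Real.pi) * |Γt j|)) ≤ tCB) := by
  have hA : (∑ j, r j) - tCB * (∑ j, r j * |Γ j|)
      ≤ ∑ j, r j * Real.exp (Γ j * tCB) := by
    rw [Finset.mul_sum, ← Finset.sum_sub_distrib]
    apply Finset.sum_le_sum
    intro j _
    have habs : |Γ j| = -Γ j := abs_of_nonpos (hΓ j)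
    have hexp : Γ j * tCB + 1 ≤ Real.exp (Γ j * tCB) := Real.add_one_le_exp _
    rw [habs]
    nlinarith [mul_le_mul_of_nonneg_left hexp (hr j)]
  have hB : ((Real.pi - 2) / Real.pi) * (∑ j, rt j)
      - tCB * (∑ j, rt j * ((2 / Real.pi) * ωt j + ((Real.pi - 2) / Real.pi) * |Γt j|))
      ≤ ∑ j, rt j * Real.exp (Γt j * tCB) * Real.cos (ωt j * tCB) := by
    rw [Finset.mul_sum, Finset.mul_sum, ← Finset.sum_sub_distrib]
    apply Finset.sum_le_sum
    intro j _
    have habs : |Γt j| = -Γt j := abs_of_nonpos (hΓt j)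
    have hkey := ml_key_bound (ωt j * tCB) (-Γt j * tCB)
      (mul_nonneg (hωt j) htCB0) (mul_nonneg (by linarith [hΓt j]) htCB0)
    have hexpeq : Γt j * tCB = -(-Γt j * tCB) := by ring
    rw [hexpeq, habs]
    have := mul_le_mul_of_nonneg_left hkey (hrt j)
    nlinarith [this]
  have hmain : (∑ j, r j) + 2 * ((Real.pi - 2) / Real.pi) * (∑ j, rt j) - r0 ≤
      tCB * ((∑ j, r j * |Γ j|)
        + 2 * ∑ j, rt j * ((2 / Real.pi) * ωt j
            + ((Real.pi - 2) / Real.pi) * |Γt j|)) := by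
    have hw' := hwtCB
    rw [hw tCB] at hw'
    have hexpand : tCB * ((∑ j, r j * |Γ j|)
        + 2 * ∑ j, rt j * ((2 / Real.pi) * ωt j
            + ((Real.pi - 2) / Real.pi) * |Γt j|))
      = tCB * (∑ j, r j * |Γ j|)
        + 2 * (tCB * ∑ j, rt j * ((2 / Real.pi) * ωt j
            + ((Real.pi - 2) / Real.pi) * |Γt j|)) := by ring
    rw [hexpand]
    linarith
  refine ⟨hmain, fun hD => ?_⟩
  rw [div_le_iff₀ hD]
  exact hmain
end

section
/- Let d ≥ 1, let ι be a finite index set with a distinguished element 0, and let u, v : ι → M_d(ℂ) be families with u_0 = 1 (the identity matrix), v_0 = (1/d)·1, and the biorthogonality relation tr(v_αᴴ u_β) = δ_{αβ} for all α, β ∈ ι. Then for every α ∈ ι, tr( ρ₊ · (P_{u_α,v_α} ⊗ id)(W) ) = δ_{α0} − 1/d; in particular this coefficient equals 1 − 1/d ≥ 0 for α = 0 and equals −1/d < 0 for α ≠ 0, so the pair (ρ₊, W) is a good configuration. (Lemma 2 and its Corollary.) -/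
open Matrix
open scoped Kronecker BigOperators

/-- The maximally entangled state `ρ₊ = (1/d)·∑_{j,j'} E_{jj'} ⊗ E_{jj'}` in
`M_d(ℂ) ⊗ M_d(ℂ)`, realized via the Kronecker product. -/
noncomputable def rhoPlus (d : ℕ) : Matrix (Fin d × Fin d) (Fin d × Fin d) ℂ :=
  ((d : ℂ))⁻¹ • ∑ j : Fin d, ∑ j' : Fin d,
    (Matrix.single j j' (1 : ℂ)) ⊗ₖ (Matrix.single j j' (1 : ℂ))

/-- The symmetric entanglement witness `W = 1⊗1 − d·ρ₊`. -/
noncomputable def symWitness (d : ℕ) : Matrix (Fin d × Fin d) (Fin d × Fin d) ℂ :=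
  1 - (d : ℂ) • rhoPlus d

/-- The map `P_{u,v} ⊗ id` on `M_d(ℂ) ⊗ M_d(ℂ)`, where `P_{u,v}(X) = tr(vᴴ X)·u`:
it acts as `P_{u,v}` on the first tensor (Kronecker) factor and as the identity on
the second; explicitly, on the Kronecker product `A ⊗ₖ B` it returns
`(tr(vᴴ A) • u) ⊗ₖ B`, extended by linearity to all of `M_{d²}(ℂ)`. -/
noncomputable def PuvTensorId {d : ℕ} (u v : Matrix (Fin d) (Fin d) ℂ)
    (M : Matrix (Fin d × Fin d) (Fin d × Fin d) ℂ) :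
    Matrix (Fin d × Fin d) (Fin d × Fin d) ℂ :=
  fun p q => u p.1 q.1 * ∑ a : Fin d, ∑ b : Fin d,
    (starRingEnd ℂ) (v a b) * M (a, p.2) (b, q.2)


/-! Expanding entries, `tr(ρ₊ · (P_{u,v} ⊗ id)(W)) = (tr u · conj (tr v) − tr(vᴴ u)) / d` for any
`u, v`. Pairing the family with `u₀ = 1` and `v₀ = 1/d` gives `conj (tr v_α) = δ_{α0}` and
`tr u_α = d · δ_{0α}`, while `tr(v_αᴴ u_α) = 1`, so the coefficient is `(d δ_{α0} − 1) / d`. -/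

lemma rhoPlus_apply (d : ℕ) (p q : Fin d × Fin d) :
    rhoPlus d p q = (d : ℂ)⁻¹ * ((if p.1 = p.2 then 1 else 0) * (if q.1 = q.2 then 1 else 0)) := by
  obtain ⟨a, b⟩ := p
  obtain ⟨c, e⟩ := q
  simp only [rhoPlus, Matrix.smul_apply, Matrix.sum_apply, kroneckerMap_apply, single, of_apply,
    smul_eq_mul]
  congr 1
  simp only [ite_and, mul_ite, mul_one, mul_zero]
  by_cases hab : a = b <;> by_cases hce : c = e <;> simp [hab, hce, eq_comm]

lemma symWitness_apply (d : ℕ) (a j b i : Fin d) :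
    symWitness d (a, j) (b, i) =
      (if a = b then 1 else 0) * (if j = i then 1 else 0) -
        (if a = j then 1 else 0) * (if b = i then 1 else 0) := by
  have hd : (d : ℂ) ≠ 0 := Nat.cast_ne_zero.mpr (Fin.pos a).ne'
  simp only [symWitness, Matrix.sub_apply, Matrix.smul_apply, rhoPlus_apply, smul_eq_mul,
    ← mul_assoc, mul_inv_cancel₀ hd, one_mul, one_apply, Prod.mk.injEq, ite_and, ite_mul, one_mul, zero_mul]

lemma trace_rhoPlus_mul (d : ℕ) (M : Matrix (Fin d × Fin d) (Fin d × Fin d) ℂ) :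
    trace (rhoPlus d * M) = (d : ℂ)⁻¹ * ∑ i : Fin d, ∑ j : Fin d, M (j, j) (i, i) := by
  simp [trace, mul_apply, rhoPlus_apply, Fintype.sum_prod_type, Finset.mul_sum]

lemma PuvTensorId_symWitness_apply {d : ℕ} (u v : Matrix (Fin d) (Fin d) ℂ) (i j : Fin d) :
    PuvTensorId u v (symWitness d) (j, j) (i, i) =
      u j i * ((if j = i then starRingEnd ℂ (trace v) else 0) - starRingEnd ℂ (v j i)) := by
  simp only [PuvTensorId]
  congr 1
  by_cases hji : j = i <;>
    simp [symWitness_apply, hji, mul_sub, Finset.sum_sub_distrib, trace, map_sum]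

theorem trace_rhoPlus_mul_PuvTensorId_symWitness {d : ℕ} (u v : Matrix (Fin d) (Fin d) ℂ) :
    trace (rhoPlus d * PuvTensorId u v (symWitness d)) =
      (d : ℂ)⁻¹ * (trace u * starRingEnd ℂ (trace v) - trace (vᴴ * u)) := by
  simp only [trace_rhoPlus_mul, PuvTensorId_symWitness_apply, mul_sub, Finset.sum_sub_distrib]
  congr 2
  · simp [trace, Finset.sum_mul]
  · simp [trace, mul_apply, mul_comm]

theorem symmetric_configuration_is_good_general {ι : Type*} [DecidableEq ι]
    (d : ℕ) (hd : 1 ≤ d) (α₀ : ι)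
    (u v : ι → Matrix (Fin d) (Fin d) ℂ)
    (hu0 : u α₀ = 1) (hv0 : v α₀ = ((d : ℂ))⁻¹ • 1)
    (hbi : ∀ α β, Matrix.trace ((v α)ᴴ * u β) = if α = β then 1 else 0) :
    (∀ α, Matrix.trace (rhoPlus d * PuvTensorId (u α) (v α) (symWitness d)) =
      (if α = α₀ then 1 else 0) - 1 / (d : ℂ)) ∧
    (0 : ℝ) ≤ 1 - 1 / (d : ℝ) ∧ -(1 / (d : ℝ)) < 0 := by
  have hd_pos : (0 : ℝ) < d := by exact_mod_cast hd
  have hdC : (d : ℂ) ≠ 0 := by exact_mod_cast (Nat.one_le_iff_ne_zero.mp hd)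
  refine ⟨fun α => ?_, ?_, by simpa using hd_pos⟩
  · have htr_u : trace (u α) = d * (if α₀ = α then 1 else 0) := by
      have h := hbi α₀ α
      simp only [hv0, conjTranspose_smul, conjTranspose_one, smul_mul, one_mul, trace_smul,
        star_inv₀, star_natCast, smul_eq_mul] at h
      rw [← h, mul_inv_cancel_left₀ hdC]
    have htr_v : starRingEnd ℂ (trace (v α)) = if α = α₀ then 1 else 0 := by
      simpa [hu0, trace_conjTranspose] using hbi α α₀
    rw [trace_rhoPlus_mul_PuvTensorId_symWitness, htr_u, htr_v, hbi α α, if_pos rfl]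
    by_cases hα : α = α₀
    · simp [hα]
      field_simp
    · simp [hα, Ne.symm hα]
  · have : 1 / (d : ℝ) ≤ 1 := by rw [div_le_one hd_pos]; exact_mod_cast hd
    linarith

/-- **Lemma 2 and its Corollary.** For a biorthogonal family
`u, v : ι → M_d(ℂ)` with `u_0 = 1`, `v_0 = (1/d)·1` and
`tr(v_αᴴ u_β) = δ_{αβ}`, the witness coefficients in the symmetric
configuration satisfy `tr(ρ₊ · (P_{u_α,v_α} ⊗ id)(W)) = δ_{α0} − 1/d`;
in particular this equals `1 − 1/d ≥ 0` for `α = 0` and `−1/d < 0` for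
`α ≠ 0`, so the pair `(ρ₊, W)` is a good configuration. -/
theorem symmetric_configuration_is_good {ι : Type*} [Fintype ι] [DecidableEq ι]
    (d : ℕ) (hd : 1 ≤ d) (α₀ : ι)
    (u v : ι → Matrix (Fin d) (Fin d) ℂ)
    (hu0 : u α₀ = 1) (hv0 : v α₀ = ((d : ℂ))⁻¹ • 1)
    (hbi : ∀ α β, Matrix.trace ((v α)ᴴ * u β) = if α = β then 1 else 0) :
    (∀ α, Matrix.trace (rhoPlus d * PuvTensorId (u α) (v α) (symWitness d)) =
      (if α = α₀ then 1 else 0) - 1 / (d : ℂ)) ∧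
    (0 : ℝ) ≤ 1 - 1 / (d : ℝ) ∧ -(1 / (d : ℝ)) < 0 :=
  symmetric_configuration_is_good_general d hd α₀ u v hu0 hv0 hbi
end

section
/- Let d ≥ 1, let ι be a finite index set of cardinality d², and let λ : ι → ℂ satisfy Re(λ_α) ≤ 0 for all α. Define w(t) = 1 − (1/d)·∑_{α∈ι} Re(exp(t·λ_α)). If t ≥ 0 and w(t) ≥ 0, then t · ∑_{α∈ι} |λ_α| ≥ d(d−1). (Mandelstam–Tamm-inspired lower bound for the entanglement-breaking time in the symmetric configuration: t_EB ≥ d(d−1)/∑_α |λ_α|.) -/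
open scoped BigOperators

lemma abs_exp_sub_one_le_of_re_nonpos (z : ℂ) (hz : z.re ≤ 0) :
    ‖Complex.exp z - 1‖ ≤ ‖z‖ := by
  rcases eq_or_ne z 0 with rfl | hz0
  · simp
  · have hint : ∫ s in (0:ℝ)..1, Complex.exp (z * s) =
        (Complex.exp (z * 1) - Complex.exp (z * 0)) / z :=
      integral_exp_mul_complex hz0
    have heq : Complex.exp z - 1 = z * ∫ s in (0:ℝ)..1, Complex.exp (z * s) := by
      rw [hint]
      field_simp
      simp
    have hb : ‖∫ s in (0:ℝ)..1, Complex.exp (z * s)‖ ≤ 1 * |(1:ℝ) - 0| := by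
      apply intervalIntegral.norm_integral_le_of_norm_le_const
      intro x hx
      rw [Set.uIoc_of_le (by norm_num : (0:ℝ) ≤ 1)] at hx
      rw [show ‖Complex.exp (z * x)‖ = Real.exp ((z * x).re) from Complex.norm_exp _,
        show (z * (x:ℂ)).re = z.re * x by simp [Complex.mul_re]]
      exact Real.exp_le_one_iff.mpr (mul_nonpos_of_nonpos_of_nonneg hz (le_of_lt hx.1))
    simp only [sub_zero, abs_one, mul_one] at hb
    calc ‖Complex.exp z - 1‖
        = ‖z‖ * ‖∫ s in (0:ℝ)..1, Complex.exp (z * s)‖ := by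
          rw [heq, norm_mul]
      _ ≤ ‖z‖ * 1 := by
          exact mul_le_mul_of_nonneg_left hb (norm_nonneg z)
      _ = ‖z‖ := mul_one _

/-- **Mandelstam–Tamm-inspired lower bound on the entanglement-breaking time
in the symmetric configuration.** Let `λ : ι → ℂ` (with `|ι| = d²`) be the
eigenvalues of the generator, all with nonpositive real part, and let
`w(t) = 1 − (1/d)·∑_α Re(exp(t·λ_α))` be the symmetric-configuration witness
value. If `t ≥ 0` and `w(t) ≥ 0`, then `t·∑_α |λ_α| ≥ d(d−1)`, i.e.
`t_EB ≥ d(d−1)/∑_α |λ_α|`. -/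
theorem mandelstam_tamm_symmetric_configuration {ι : Type*} [Fintype ι]
    (d : ℕ) (hd : 1 ≤ d) (hcard : Fintype.card ι = d ^ 2)
    (lam : ι → ℂ) (hlam : ∀ α, (lam α).re ≤ 0)
    (w : ℝ → ℝ)
    (hw : ∀ t, w t = 1 - (1 / (d : ℝ)) * ∑ α, (Complex.exp (t * lam α)).re)
    (t : ℝ) (ht : 0 ≤ t) (hwt : 0 ≤ w t) :
    (d : ℝ) * ((d : ℝ) - 1) ≤ t * ∑ α, ‖lam α‖ := by
  have hd0 : (0:ℝ) < d := by exact_mod_cast hd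
  -- pointwise bound
  have hpt : ∀ α, 1 - t * ‖lam α‖ ≤ (Complex.exp (t * lam α)).re := by
    intro α
    have hre : (t * (lam α) : ℂ).re ≤ 0 := by
      have : ((t : ℂ) * lam α).re = t * (lam α).re := by simp [Complex.mul_re]
      rw [this]
      exact mul_nonpos_of_nonneg_of_nonpos ht (hlam α)
    have h1 := abs_exp_sub_one_le_of_re_nonpos (t * lam α) hre
    have h2 : |(Complex.exp (t * lam α) - 1).re| ≤ ‖Complex.exp (t * lam α) - 1‖ :=
      Complex.abs_re_le_norm _
    have h3 : ‖(t : ℂ) * lam α‖ = t * ‖lam α‖ := by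
      rw [norm_mul, Complex.norm_real, Real.norm_of_nonneg ht]
    have h4 : (Complex.exp (t * lam α) - 1).re = (Complex.exp (t * lam α)).re - 1 := by simp
    nlinarith [abs_le.mp (h2.trans (h1.trans_eq h3))]
  -- sum bound
  have hsum : (d:ℝ)^2 - t * ∑ α, ‖lam α‖ ≤ ∑ α, (Complex.exp (t * lam α)).re := by
    calc (d:ℝ)^2 - t * ∑ α, ‖lam α‖
        = ∑ α : ι, (1 - t * ‖lam α‖) := by
          rw [Finset.sum_sub_distrib, Finset.sum_const, ← Finset.mul_sum]
          simp [hcard]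
      _ ≤ ∑ α, (Complex.exp (t * lam α)).re := Finset.sum_le_sum fun α _ => hpt α
  -- from witness
  have hS : ∑ α, (Complex.exp (t * lam α)).re ≤ d := by
    have := hwt
    rw [hw t] at this
    rw [div_mul_eq_mul_div, one_mul] at this
    have h := (div_le_one hd0).mp (by linarith)
    linarith
  nlinarith
end
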